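/- arXiv:2110.06906 — 7 statements merged into one kernel-verified Lean document; each statement's English description precedes it below -/
import Mathlib

section
/- Let D = diag(d(1), …, d(N)) be an N×N diagonal matrix, let P be an N×N row-stochastic matrix, let Q be an N×N real matrix satisfying 0 ≤ Q_{ij} ≤ C · P_{ij} for all i, j, where C > 1 is a constant, and let Φ be an N×k real matrix whose rows φ(s) satisfy ‖φ(s)‖₂ ≤ B_φ. Then for all natural numbers m and n: trace(Q^m P^n Φ Φᵀ D) ≤ C^m B_φ² ‖d‖₁ and trace(P^n Q^m Φ Φᵀ D) ≤ C^m B_φ² ‖d‖₁. -/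
/-!
Both products `Q ^ m * P ^ n` and `P ^ n * Q ^ m` have `ℓ∞`-operator norm (maximal absolute row
sum) at most `C ^ m`, because `‖P‖ ≤ 1`, `‖Q‖ ≤ C` and the norm is submultiplicative. By
Cauchy–Schwarz the Gram matrix `Φ * Φᵀ` has entries bounded by `Bφ ^ 2`, so each diagonal entry of
`A * (Φ * Φᵀ)` is at most `‖A‖ * Bφ ^ 2` in absolute value; pairing with `d` gives the trace bound.
-/

open Matrix BigOperators

attribute [local instance] Matrix.linftyOpNormedAddCommGroup Matrix.linftyOpNormedRing

lemma Real.abs_sum_mul_le_sqrt_mul_sqrt {ι : Type*} (s : Finset ι) (f g : ι → ℝ) :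
    |∑ i ∈ s, f i * g i| ≤ √(∑ i ∈ s, f i ^ 2) * √(∑ i ∈ s, g i ^ 2) := by
  refine abs_le.2 ⟨?_, Real.sum_mul_le_sqrt_mul_sqrt s f g⟩
  have := Real.sum_mul_le_sqrt_mul_sqrt s (-f) g
  simp only [Pi.neg_apply, neg_mul, Finset.sum_neg_distrib, neg_sq] at this
  linarith

namespace Matrix

variable {l m n : Type*}

lemma abs_mul_transpose_self_apply_le [Fintype n] {Φ : Matrix l n ℝ} {B : ℝ}
    (hΦ : ∀ s, √(∑ j, Φ s j ^ 2) ≤ B) (i j : l) : |(Φ * Φᵀ) i j| ≤ B ^ 2 :=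
  calc |(Φ * Φᵀ) i j| = |∑ t, Φ i t * Φ j t| := by simp only [mul_apply, transpose_apply]
    _ ≤ √(∑ t, Φ i t ^ 2) * √(∑ t, Φ j t ^ 2) := Real.abs_sum_mul_le_sqrt_mul_sqrt _ _ _
    _ ≤ B * B := mul_le_mul (hΦ i) (hΦ j) (Real.sqrt_nonneg _) ((Real.sqrt_nonneg _).trans (hΦ i))
    _ = B ^ 2 := (sq B).symm

lemma sum_abs_le_linfty_opNorm [Fintype m] [Fintype n] (A : Matrix m n ℝ) (i : m) :
    ∑ j, |A i j| ≤ ‖A‖ := by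
  have hrow : ((∑ j, ‖A i j‖₊ : NNReal) : ℝ) = ∑ j, |A i j| := by
    simp [Real.norm_eq_abs]
  rw [linfty_opNorm_def, ← hrow, NNReal.coe_le_coe]
  exact Finset.le_sup (f := fun i => ∑ j, ‖A i j‖₊) (Finset.mem_univ i)

lemma linfty_opNorm_le_of_sum_abs_le [Fintype m] [Fintype n] {A : Matrix m n ℝ} {c : ℝ}
    (hc : 0 ≤ c) (h : ∀ i, ∑ j, |A i j| ≤ c) : ‖A‖ ≤ c := by
  lift c to NNReal using hc
  rw [linfty_opNorm_def, NNReal.coe_le_coe]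
  refine Finset.sup_le fun i _ => ?_
  rw [← NNReal.coe_le_coe]
  push_cast [coe_nnnorm, Real.norm_eq_abs]
  exact h i

lemma linfty_opNorm_le_of_nonneg_of_sum_le [Fintype m] [Fintype n] {A : Matrix m n ℝ} {c : ℝ}
    (hc : 0 ≤ c) (hA : ∀ i j, 0 ≤ A i j) (h : ∀ i, ∑ j, A i j ≤ c) : ‖A‖ ≤ c :=
  linfty_opNorm_le_of_sum_abs_le hc fun i => by simpa only [abs_of_nonneg (hA i _)] using h i

lemma linfty_opNorm_pow_le [Fintype n] [DecidableEq n] {A : Matrix n n ℝ} {c : ℝ}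
    (hA : ‖A‖ ≤ c) :
    ∀ k : ℕ, ‖A ^ k‖ ≤ c ^ k
  | 0 => by
    rw [pow_zero, pow_zero]
    refine linfty_opNorm_le_of_sum_abs_le zero_le_one fun i => ?_
    simp [one_apply, apply_ite (|·|)]
  | k + 1 => (norm_pow_le' A k.succ_pos).trans (pow_le_pow_left₀ (norm_nonneg A) hA _)

lemma abs_mul_apply_le [Fintype l] [Fintype m] (A : Matrix l m ℝ) {G : Matrix m n ℝ} {B : ℝ}
    (hB : 0 ≤ B) (hG : ∀ i j, |G i j| ≤ B) (i : l) (j : n) : |(A * G) i j| ≤ ‖A‖ * B :=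
  calc |(A * G) i j| = |∑ t, A i t * G t j| := by rw [mul_apply]
    _ ≤ ∑ t, |A i t| * |G t j| := by
      simpa only [abs_mul] using Finset.abs_sum_le_sum_abs (fun t => A i t * G t j) _
    _ ≤ ∑ t, |A i t| * B :=
      Finset.sum_le_sum fun t _ => mul_le_mul_of_nonneg_left (hG t j) (abs_nonneg _)
    _ = (∑ t, |A i t|) * B := (Finset.sum_mul _ _ _).symm
    _ ≤ ‖A‖ * B := mul_le_mul_of_nonneg_right (sum_abs_le_linfty_opNorm A i) hB

lemma trace_mul_mul_diagonal_le [Fintype n] [DecidableEq n] (A G : Matrix n n ℝ) {B : ℝ}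
    (hB : 0 ≤ B) (hG : ∀ i j, |G i j| ≤ B) (d : n → ℝ) :
    trace (A * G * diagonal d) ≤ ‖A‖ * B * ∑ i, |d i| :=
  calc trace (A * G * diagonal d) = ∑ i, (A * G) i i * d i := by
        simp only [trace, diag_apply, mul_diagonal]
    _ ≤ ∑ i, ‖A‖ * B * |d i| := Finset.sum_le_sum fun i _ =>
      calc (A * G) i i * d i ≤ |(A * G) i i| * |d i| := (le_abs_self _).trans_eq (abs_mul _ _)
        _ ≤ ‖A‖ * B * |d i| :=
          mul_le_mul_of_nonneg_right (abs_mul_apply_le A hB hG i i) (abs_nonneg _)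
    _ = ‖A‖ * B * ∑ i, |d i| := (Finset.mul_sum _ _ _).symm

end Matrix

/-- For a diagonal matrix `D = diag d`, a row-stochastic matrix `P`,
a matrix `Q` with `0 ≤ Q i j ≤ C * P i j` (`C > 1`), and a feature matrix `Φ` whose
rows have Euclidean norm at most `B_φ`, for all `m n : ℕ`:
`trace (Q^m * P^n * Φ * Φᵀ * D) ≤ C^m * B_φ² * ‖d‖₁` and
`trace (P^n * Q^m * Φ * Φᵀ * D) ≤ C^m * B_φ² * ‖d‖₁`. -/
theorem trace_kernel_feature_bound (N k : ℕ) (d : Fin N → ℝ)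
    (P Q : Matrix (Fin N) (Fin N) ℝ)
    (hP0 : ∀ i j, 0 ≤ P i j) (hProw : ∀ i, ∑ j, P i j = 1)
    (C : ℝ) (hC : 1 < C)
    (hQ0 : ∀ i j, 0 ≤ Q i j) (hQC : ∀ i j, Q i j ≤ C * P i j)
    (Φ : Matrix (Fin N) (Fin k) ℝ) (Bφ : ℝ)
    (hΦ : ∀ s, Real.sqrt (∑ j, (Φ s j) ^ 2) ≤ Bφ)
    (m n : ℕ) :
    Matrix.trace (Q ^ m * P ^ n * Φ * Φᵀ * Matrix.diagonal d) ≤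
        C ^ m * Bφ ^ 2 * ∑ s, |d s| ∧
    Matrix.trace (P ^ n * Q ^ m * Φ * Φᵀ * Matrix.diagonal d) ≤
        C ^ m * Bφ ^ 2 * ∑ s, |d s| := by
  have hC0 : 0 ≤ C := zero_le_one.trans hC.le
  have hP : ‖P‖ ≤ 1 :=
    linfty_opNorm_le_of_nonneg_of_sum_le zero_le_one hP0 fun i => (hProw i).le
  have hQ : ‖Q‖ ≤ C := linfty_opNorm_le_of_nonneg_of_sum_le hC0 hQ0 fun i =>
    calc ∑ j, Q i j ≤ ∑ j, C * P i j := Finset.sum_le_sum fun j _ => hQC i j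
      _ = C := by rw [← Finset.mul_sum, hProw i, mul_one]
  have hQm := linfty_opNorm_pow_le hQ m
  have hPn := linfty_opNorm_pow_le hP n
  rw [one_pow] at hPn
  have hQP : ‖Q ^ m * P ^ n‖ ≤ C ^ m := (norm_mul_le _ _).trans <|
    (mul_le_mul hQm hPn (norm_nonneg _) (pow_nonneg hC0 m)).trans_eq (mul_one _)
  have hPQ : ‖P ^ n * Q ^ m‖ ≤ C ^ m := (norm_mul_le _ _).trans <|
    (mul_le_mul hPn hQm (norm_nonneg _) zero_le_one).trans_eq (one_mul _)
  have hG := abs_mul_transpose_self_apply_le hΦ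
  simp only [Matrix.mul_assoc _ Φ Φᵀ]
  exact ⟨(trace_mul_mul_diagonal_le _ _ (sq_nonneg Bφ) hG d).trans (by gcongr),
    (trace_mul_mul_diagonal_le _ _ (sq_nonneg Bφ) hG d).trans (by gcongr)⟩
end

section
/- Let P be an N×N row-stochastic matrix, let γ, χ ∈ (0,1) with γ ≠ χ, let C_M ≥ 0, and let b ≥ 1 be an integer. Let d, d₁, …, d_b ∈ ℝ^N satisfy ‖d − d_τ‖₁ ≤ C_M χ^τ for τ = 1, …, b. Let f ∈ ℝ^N satisfy f = d + γ Pᵀ f, let f₀ ∈ ℝ^N with ‖f₀‖₁ ≤ 1, and define f_τ = d_τ + γ Pᵀ f_{τ−1} for τ = 1, …, b. Then ‖f − f_b‖₁ ≤ (C_M / |χ − γ|) ξ^b + γ^b (1 + ‖f‖₁), where ξ = max{γ, χ}. -/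
/-!
The error `e_τ = ‖f - f_τ‖₁` obeys `e_{τ+1} ≤ C_M χ^{τ+1} + γ e_τ`, because `Pᵀ` is nonexpansive
in `ℓ¹` when `P` is row-stochastic. Unrolling this recurrence gives
`e_b ≤ C_M χ (χ^b - γ^b) / (χ - γ) + γ^b e₀`, and `|χ^b - γ^b| ≤ (max γ χ)^b`.
-/

open Matrix BigOperators

section

variable {ι : Type*} [Fintype ι]

theorem sum_abs_transpose_mulVec_le {P : Matrix ι ι ℝ} (hP0 : ∀ i j, 0 ≤ P i j)
    (hProw : ∀ i, ∑ j, P i j ≤ 1) (x : ι → ℝ) :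
    ∑ i, |(Pᵀ *ᵥ x) i| ≤ ∑ i, |x i| :=
  calc ∑ i, |(Pᵀ *ᵥ x) i| = ∑ i, |∑ j, P j i * x j| := by
        simp only [mulVec, dotProduct, transpose_apply]
    _ ≤ ∑ i, ∑ j, P j i * |x j| := by
        gcongr with i
        refine (Finset.abs_sum_le_sum_abs _ _).trans_eq (Finset.sum_congr rfl fun j _ => ?_)
        rw [abs_mul, abs_of_nonneg (hP0 j i)]
    _ = ∑ j, (∑ i, P j i) * |x j| := by
        rw [Finset.sum_comm]
        simp only [Finset.sum_mul]
    _ ≤ ∑ j, |x j| := by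
        gcongr with j
        exact mul_le_of_le_one_left (abs_nonneg _) (hProw j)

theorem sum_abs_sub_affine_transpose_mulVec_le {P : Matrix ι ι ℝ} (hP0 : ∀ i j, 0 ≤ P i j)
    (hProw : ∀ i, ∑ j, P i j ≤ 1) {γ : ℝ} (hγ : 0 ≤ γ) (d d' x y : ι → ℝ) :
    ∑ i, |(d + γ • (Pᵀ *ᵥ x)) i - (d' + γ • (Pᵀ *ᵥ y)) i| ≤
      ∑ i, |d i - d' i| + γ * ∑ i, |x i - y i| :=
  calc ∑ i, |(d + γ • (Pᵀ *ᵥ x)) i - (d' + γ • (Pᵀ *ᵥ y)) i|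
        = ∑ i, |(d i - d' i) + γ * (Pᵀ *ᵥ (x - y)) i| := by
        congr! 2 with i
        simp only [mulVec_sub, Pi.add_apply, Pi.sub_apply, Pi.smul_apply, smul_eq_mul]
        ring
    _ ≤ ∑ i, (|d i - d' i| + γ * |(Pᵀ *ᵥ (x - y)) i|) := by
        gcongr with i
        exact (abs_add_le _ _).trans_eq (by rw [abs_mul, abs_of_nonneg hγ])
    _ ≤ ∑ i, |d i - d' i| + γ * ∑ i, |x i - y i| := by
        rw [Finset.sum_add_distrib, ← Finset.mul_sum]
        gcongr _ + γ * ?_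
        exact sum_abs_transpose_mulVec_le hP0 hProw (x - y)

end

theorem le_of_step_le_pow_add_mul {e : ℕ → ℝ} {c γ χ : ℝ} (hγ : 0 ≤ γ) (hγχ : γ ≠ χ) {b : ℕ}
    (hstep : ∀ τ < b, e (τ + 1) ≤ c * χ ^ (τ + 1) + γ * e τ) :
    e b ≤ c * (χ * (χ ^ b - γ ^ b) / (χ - γ)) + γ ^ b * e 0 := by
  induction b with
  | zero => simp
  | succ b ih =>
    have hχγ : χ - γ ≠ 0 := sub_ne_zero.mpr hγχ.symm
    calc e (b + 1) ≤ c * χ ^ (b + 1) + γ * e b := hstep b (Nat.lt_succ_self b)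
      _ ≤ c * χ ^ (b + 1) + γ * (c * (χ * (χ ^ b - γ ^ b) / (χ - γ)) + γ ^ b * e 0) := by
        gcongr
        exact ih fun τ hτ => hstep τ (hτ.trans (Nat.lt_succ_self b))
      _ = c * (χ * (χ ^ (b + 1) - γ ^ (b + 1)) / (χ - γ)) + γ ^ (b + 1) * e 0 := by
        field_simp
        ring

theorem mul_pow_sub_pow_div_sub_le {γ χ : ℝ} (hγ : 0 ≤ γ) (hχ0 : 0 ≤ χ) (hχ1 : χ ≤ 1) (b : ℕ) :
    χ * (χ ^ b - γ ^ b) / (χ - γ) ≤ max γ χ ^ b / |χ - γ| :=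
  calc χ * (χ ^ b - γ ^ b) / (χ - γ) = χ * ((χ ^ b - γ ^ b) / (χ - γ)) := mul_div_assoc ..
    _ ≤ χ * |(χ ^ b - γ ^ b) / (χ - γ)| := by gcongr; exact le_abs_self _
    _ ≤ |χ ^ b - γ ^ b| / |χ - γ| := by
        rw [← abs_div]
        exact mul_le_of_le_one_left (abs_nonneg _) hχ1
    _ ≤ max γ χ ^ b / |χ - γ| := by
        gcongr
        exact abs_sub_le_of_nonneg_of_le (by positivity)
          (pow_le_pow_left₀ hχ0 (le_max_right γ χ) b) (by positivity)
          (pow_le_pow_left₀ hγ (le_max_left γ χ) b)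

theorem followon_trace_l1_bound_general (N : ℕ) (P : Matrix (Fin N) (Fin N) ℝ)
    (hP0 : ∀ i j, 0 ≤ P i j) (hProw : ∀ i, ∑ j, P i j = 1)
    (γ χ : ℝ) (hγ0 : 0 < γ) (hχ0 : 0 < χ) (hχ1 : χ < 1) (hγχ : γ ≠ χ)
    (CM : ℝ) (hCM : 0 ≤ CM) (b : ℕ)
    (d : Fin N → ℝ) (dseq : ℕ → Fin N → ℝ)
    (hd : ∀ τ, 1 ≤ τ → τ ≤ b → ∑ i, |d i - dseq τ i| ≤ CM * χ ^ τ)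
    (f : Fin N → ℝ) (hf : f = d + γ • (Pᵀ *ᵥ f))
    (F : ℕ → Fin N → ℝ) (hF0 : ∑ i, |F 0 i| ≤ 1)
    (hFrec : ∀ τ, 1 ≤ τ → τ ≤ b → F τ = dseq τ + γ • (Pᵀ *ᵥ F (τ - 1))) :
    ∑ i, |f i - F b i| ≤
      CM / |χ - γ| * (max γ χ) ^ b + γ ^ b * (1 + ∑ i, |f i|) := by
  set e : ℕ → ℝ := fun τ => ∑ i, |f i - F τ i|
  have hstep : ∀ τ < b, e (τ + 1) ≤ CM * χ ^ (τ + 1) + γ * e τ := by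
    intro τ hτ
    have h := sum_abs_sub_affine_transpose_mulVec_le hP0 (fun i => (hProw i).le) hγ0.le
      d (dseq (τ + 1)) f (F τ)
    have hF := hFrec (τ + 1) (Nat.le_add_left 1 τ) hτ
    rw [Nat.add_sub_cancel] at hF
    rw [← hf, ← hF] at h
    linarith [hd (τ + 1) (Nat.le_add_left 1 τ) hτ]
  have he0 : e 0 ≤ 1 + ∑ i, |f i| :=
    calc e 0 ≤ ∑ i, (|f i| + |F 0 i|) := Finset.sum_le_sum fun i _ => abs_sub _ _
      _ ≤ 1 + ∑ i, |f i| := by rw [Finset.sum_add_distrib]; linarith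
  calc e b ≤ CM * (χ * (χ ^ b - γ ^ b) / (χ - γ)) + γ ^ b * e 0 :=
        le_of_step_le_pow_add_mul hγ0.le hγχ hstep
    _ ≤ CM * (max γ χ ^ b / |χ - γ|) + γ ^ b * (1 + ∑ i, |f i|) := by
        gcongr CM * ?_ + _ * ?_
        exact mul_pow_sub_pow_div_sub_le hγ0.le hχ0.le hχ1.le b
    _ = CM / |χ - γ| * (max γ χ) ^ b + γ ^ b * (1 + ∑ i, |f i|) := by ring

/-- Follow-on trace ℓ1 error bound. With `P` row-stochastic,
`γ, χ ∈ (0,1)`, `γ ≠ χ`, `C_M ≥ 0`, `b ≥ 1`, `‖d - d_τ‖₁ ≤ C_M χ^τ` for `τ = 1, …, b`,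
`f = d + γ Pᵀ f`, `‖f₀‖₁ ≤ 1`, and `f_τ = d_τ + γ Pᵀ f_{τ-1}` for `τ = 1, …, b`, we have
`‖f - f_b‖₁ ≤ (C_M / |χ - γ|) ξ^b + γ^b (1 + ‖f‖₁)` where `ξ = max γ χ`. -/
theorem followon_trace_l1_bound (N : ℕ) (P : Matrix (Fin N) (Fin N) ℝ)
    (hP0 : ∀ i j, 0 ≤ P i j) (hProw : ∀ i, ∑ j, P i j = 1)
    (γ χ : ℝ) (hγ0 : 0 < γ) (hγ1 : γ < 1) (hχ0 : 0 < χ) (hχ1 : χ < 1) (hγχ : γ ≠ χ)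
    (CM : ℝ) (hCM : 0 ≤ CM) (b : ℕ) (hb : 1 ≤ b)
    (d : Fin N → ℝ) (dseq : ℕ → Fin N → ℝ)
    (hd : ∀ τ, 1 ≤ τ → τ ≤ b → ∑ i, |d i - dseq τ i| ≤ CM * χ ^ τ)
    (f : Fin N → ℝ) (hf : f = d + γ • (Pᵀ *ᵥ f))
    (F : ℕ → Fin N → ℝ) (hF0 : ∑ i, |F 0 i| ≤ 1)
    (hFrec : ∀ τ, 1 ≤ τ → τ ≤ b → F τ = dseq τ + γ • (Pᵀ *ᵥ F (τ - 1))) :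
    ∑ i, |f i - F b i| ≤
      CM / |χ - γ| * (max γ χ) ^ b + γ ^ b * (1 + ∑ i, |f i|) :=
  followon_trace_l1_bound_general N P hP0 hProw γ χ hγ0 hχ0 hχ1 hγχ CM hCM b d dseq hd f hf F hF0
    hFrec
end

section
/- Let P be an N×N row-stochastic matrix, let Φ be an N×k real matrix whose rows φ(s) satisfy ‖φ(s)‖₂ ≤ B_φ, let 0 ≤ λ ≤ 1 and 0 < γ < 1, and let L ≥ 0. Let d₀, d₁, …, d_τ ∈ ℝ^N be probability vectors, and let f₁, …, f_τ ∈ ℝ^N be nonnegative vectors with 𝟙ᵀ f_m ≤ 1 + L for all m. Define β₀ = Φᵀ diag(d₀) and β_m = λ Φᵀ diag(d_m) + (1−λ) Φᵀ diag(f_m) + γλ β_{m−1} P for m = 1, …, τ. Then trace(Φ β_τ P) ≤ (B_φ² / (1 − γλ)) · (1 + (1−λ) L). -/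
/-!
Every summand of `β_m` is `Φᵀ diag v` for a nonnegative `v`, multiplied on the right by a power
of `P`, and for any row-stochastic `Q` Cauchy–Schwarz on the Gram matrix `Φ Φᵀ` gives
`trace (Φ Φᵀ diag v Q) ≤ B_φ² 𝟙ᵀ v`. Since row-stochastic matrices are closed under
products, the recursion for `β_m` shows by induction that `C = B_φ² (1 + (1-λ) L) / (1 - γλ)` bounds
`trace (Φ β_m Q)` uniformly in `Q`: the new terms contribute at most `B_φ² (1 + (1-λ) L)`,
which is exactly `(1 - γλ) C`.
-/

open Matrix

variable {R n k : Type*} [Fintype k]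

section OrderedSemiring

variable [CommSemiring R] [PartialOrder R] [IsOrderedRing R]

lemma trace_mul_diagonal_mul_le [Fintype n] [DecidableEq n]
    {A Q : Matrix n n R} {v : n → R} {c : R}
    (hA : ∀ i j, A i j ≤ c) (hv : ∀ i, 0 ≤ v i) (hQ : Q ∈ rowStochastic R n) :
    trace (A * diagonal v * Q) ≤ c * ∑ i, v i := by
  calc trace (A * diagonal v * Q) = ∑ t, ∑ s, A t s * v s * Q s t := by
        simp only [trace, diag_apply, mul_apply (M := A * diagonal v), mul_diagonal]
    _ ≤ ∑ t, ∑ s, c * v s * Q s t := by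
        gcongr with t _ s _
        · exact nonneg_of_mem_rowStochastic hQ
        · exact hv s
        · exact hA t s
    _ = ∑ s, c * v s * ∑ t, Q s t := by
        rw [Finset.sum_comm]
        simp only [Finset.mul_sum]
    _ = c * ∑ i, v i := by
        simp only [sum_row_of_mem_rowStochastic hQ, mul_one, Finset.mul_sum]

lemma trace_mul_mul_le_of_recursion [Fintype n] [DecidableEq n]
    {Φ : Matrix n k R} {P : Matrix n n R} (hP : P ∈ rowStochastic R n)
    {β D : ℕ → Matrix k n R} {x a C : R} {τ : ℕ} (hx : 0 ≤ x) (hC : a + x * C ≤ C)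
    (hβ0 : ∀ Q ∈ rowStochastic R n, trace (Φ * β 0 * Q) ≤ C)
    (hD : ∀ m, 1 ≤ m → m ≤ τ → ∀ Q ∈ rowStochastic R n, trace (Φ * D m * Q) ≤ a)
    (hβ : ∀ m, 1 ≤ m → m ≤ τ → β m = D m + x • (β (m - 1) * P)) :
    ∀ m ≤ τ, ∀ Q ∈ rowStochastic R n, trace (Φ * β m * Q) ≤ C := by
  intro m
  induction m with
  | zero => exact fun _ => hβ0
  | succ m ih =>
    intro hm Q hQ
    have hsplit : trace (Φ * β (m + 1) * Q)
        = trace (Φ * D (m + 1) * Q) + x * trace (Φ * β m * (P * Q)) := by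
      rw [hβ (m + 1) m.succ_pos hm, Nat.add_sub_cancel, Matrix.mul_add, Matrix.add_mul,
        trace_add, Matrix.mul_smul, Matrix.smul_mul, trace_smul, smul_eq_mul,
        ← Matrix.mul_assoc Φ, Matrix.mul_assoc (Φ * β m)]
    rw [hsplit]
    refine le_trans (add_le_add (hD (m + 1) m.succ_pos hm Q hQ) ?_) hC
    exact mul_le_mul_of_nonneg_left (ih (m.le_succ.trans hm) _ (Submonoid.mul_mem _ hP hQ)) hx

end OrderedSemiring

lemma mul_transpose_apply_le_sq {Φ : Matrix n k ℝ} {B : ℝ}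
    (hΦ : ∀ s, √(∑ j, Φ s j ^ 2) ≤ B) (t s : n) : (Φ * Φᵀ) t s ≤ B ^ 2 :=
  calc (Φ * Φᵀ) t s = ∑ j, Φ t j * Φ s j := by simp only [mul_apply, transpose_apply]
    _ ≤ √(∑ j, Φ t j ^ 2) * √(∑ j, Φ s j ^ 2) := Real.sum_mul_le_sqrt_mul_sqrt _ _ _
    _ ≤ B * B :=
      mul_le_mul (hΦ t) (hΦ s) (Real.sqrt_nonneg _) ((Real.sqrt_nonneg _).trans (hΦ t))
    _ = B ^ 2 := (sq B).symm

lemma trace_mul_transpose_diagonal_mul_le [Fintype n] [DecidableEq n] {Φ : Matrix n k ℝ}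
    {B : ℝ} (hΦ : ∀ s, √(∑ j, Φ s j ^ 2) ≤ B) {v : n → ℝ} {c : ℝ}
    (hv : ∀ i, 0 ≤ v i) (hvc : ∑ i, v i ≤ c) {Q : Matrix n n ℝ} (hQ : Q ∈ rowStochastic ℝ n) :
    trace (Φ * (Φᵀ * diagonal v) * Q) ≤ B ^ 2 * c := by
  rw [← Matrix.mul_assoc]
  exact (trace_mul_diagonal_mul_le (mul_transpose_apply_le_sq hΦ) hv hQ).trans
    (mul_le_mul_of_nonneg_left hvc (sq_nonneg B))

/-- Trace bound for the calibrated eligibility-trace matrix. With `P`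
row-stochastic, rows of `Φ` of Euclidean norm at most `B_φ`, `0 ≤ λ ≤ 1`, `0 < γ < 1`,
`L ≥ 0`, probability vectors `d₀, …, d_τ`, nonnegative vectors `f₁, …, f_τ` with
`𝟙ᵀ f_m ≤ 1 + L`, and `β₀ = Φᵀ diag d₀`,
`β_m = λ Φᵀ diag d_m + (1-λ) Φᵀ diag f_m + γλ β_{m-1} P`, we have
`trace (Φ β_τ P) ≤ (B_φ² / (1 - γλ)) (1 + (1-λ) L)`. -/
theorem eligibility_trace_trace_bound (N k : ℕ)
    (P : Matrix (Fin N) (Fin N) ℝ)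
    (hP0 : ∀ i j, 0 ≤ P i j) (hProw : ∀ i, ∑ j, P i j = 1)
    (Φ : Matrix (Fin N) (Fin k) ℝ) (Bφ : ℝ)
    (hΦ : ∀ s, Real.sqrt (∑ j, (Φ s j) ^ 2) ≤ Bφ)
    (l γ L : ℝ) (hl0 : 0 ≤ l) (hl1 : l ≤ 1) (hγ0 : 0 < γ) (hγ1 : γ < 1) (hL : 0 ≤ L)
    (τ : ℕ) (dseq : ℕ → Fin N → ℝ)
    (hd0 : ∀ m, m ≤ τ → ∀ i, 0 ≤ dseq m i)
    (hd1 : ∀ m, m ≤ τ → ∑ i, dseq m i = 1)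
    (fseq : ℕ → Fin N → ℝ)
    (hf0 : ∀ m, 1 ≤ m → m ≤ τ → ∀ i, 0 ≤ fseq m i)
    (hf1 : ∀ m, 1 ≤ m → m ≤ τ → ∑ i, fseq m i ≤ 1 + L)
    (β : ℕ → Matrix (Fin k) (Fin N) ℝ)
    (hβ0 : β 0 = Φᵀ * Matrix.diagonal (dseq 0))
    (hβ : ∀ m, 1 ≤ m → m ≤ τ →
      β m = l • (Φᵀ * Matrix.diagonal (dseq m))
        + (1 - l) • (Φᵀ * Matrix.diagonal (fseq m))
        + (γ * l) • (β (m - 1) * P)) :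
    Matrix.trace (Φ * β τ * P) ≤ Bφ ^ 2 / (1 - γ * l) * (1 + (1 - l) * L) := by
  have hP : P ∈ rowStochastic ℝ (Fin N) := mem_rowStochastic_iff_sum.2 ⟨hP0, hProw⟩
  have hx0 : 0 ≤ γ * l := by positivity
  have hx1 : 0 < 1 - γ * l := by nlinarith
  have hLl : 0 ≤ (1 - l) * L := mul_nonneg (sub_nonneg.2 hl1) hL
  set a := Bφ ^ 2 * (1 + (1 - l) * L)
  have hbase : ∀ Q ∈ rowStochastic ℝ (Fin N), trace (Φ * β 0 * Q) ≤ a / (1 - γ * l) := by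
    intro Q hQ
    have hd := (hd1 0 τ.zero_le).trans_le (le_add_of_nonneg_right hLl)
    rw [hβ0]
    exact (trace_mul_transpose_diagonal_mul_le hΦ (hd0 0 τ.zero_le) hd hQ).trans
      (le_div_self (by positivity) hx1 (by linarith))
  have hD : ∀ m, 1 ≤ m → m ≤ τ → ∀ Q ∈ rowStochastic ℝ (Fin N),
      trace (Φ * (l • (Φᵀ * diagonal (dseq m)) + (1 - l) • (Φᵀ * diagonal (fseq m))) * Q)
        ≤ a := by
    intro m h1m hm Q hQ
    rw [← Matrix.mul_smul, ← Matrix.mul_smul, ← Matrix.mul_add, ← diagonal_smul,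
      ← diagonal_smul, diagonal_add]
    refine trace_mul_transpose_diagonal_mul_le hΦ (fun i => add_nonneg
      (mul_nonneg hl0 (hd0 m hm i)) (mul_nonneg (sub_nonneg.2 hl1) (hf0 m h1m hm i))) ?_ hQ
    simp only [Finset.sum_add_distrib, ← Finset.mul_sum, hd1 m hm]
    nlinarith [hf1 m h1m hm]
  have hstep : a + γ * l * (a / (1 - γ * l)) ≤ a / (1 - γ * l) :=
    le_of_eq (by field_simp; ring)
  calc trace (Φ * β τ * P) ≤ a / (1 - γ * l) :=
        trace_mul_mul_le_of_recursion hP hx0 hstep hbase hD hβ τ le_rfl P hP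
    _ = Bφ ^ 2 / (1 - γ * l) * (1 + (1 - l) * L) := by ring
end

section
/- Let P be an N×N row-stochastic matrix, let γ, λ ∈ ℝ with 0 ≤ γλ < 1, let Φᵀ ∈ ℝ^{k×N}, let D, F, D₀, …, D_b, F₀, …, F_b be N×N real matrices, and set M = λD + (1−λ)F. Suppose β₀ = Φᵀ D₀ and β_τ = λΦᵀ D_τ + (1−λ)Φᵀ F_τ + γλ β_{τ−1} P for τ = 1, …, b. Then I − γλP is invertible with (I − γλP)⁻¹ = ∑_{τ=0}^∞ (γλ)^τ P^τ (the series converging entrywise), and Φᵀ M (I − γλP)⁻¹ − β_b = ∑_{τ=0}^{b−1} (γλ)^τ Φᵀ (λ(D − D_{b−τ}) + (1−λ)(F − F_{b−τ})) P^τ − (γλ)^b Φᵀ D₀ P^b + ∑_{τ=b}^∞ (γλ)^τ Φᵀ M P^τ. -/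
/-!
In the `ℓ∞` operator norm a row-stochastic `P` has `‖P‖ ≤ 1`, so `‖γλ P‖ < 1` and the Neumann
series `∑ (γλ)^τ P^τ` converges to `(I - γλP)⁻¹`. Unrolling the recursion gives
`β_b = ∑_{τ<b} (γλ)^τ Φᵀ(λD_{b-τ} + (1-λ)F_{b-τ}) P^τ + (γλ)^b β₀ P^b`; subtracting this from the
Neumann series for `ΦᵀM (I - γλP)⁻¹`, split after its first `b` terms, leaves the identity.
-/

open Matrix

namespace Matrix

section LinftyOpNorm

attribute [local instance] Matrix.linftyOpNormedAddCommGroup Matrix.linftyOpNormedSpace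
  Matrix.linftyOpNormedRing Matrix.linftyOpNormedAlgebra

variable {n : Type*} [Fintype n] [DecidableEq n] {P : Matrix n n ℝ}

theorem linfty_opNorm_le_one_of_mem_rowStochastic (hP : P ∈ rowStochastic ℝ n) : ‖P‖ ≤ 1 := by
  rw [linfty_opNorm_def, NNReal.coe_le_one, Finset.sup_le_iff]
  intro i _
  rw [← NNReal.coe_le_one, NNReal.coe_sum]
  simp only [coe_nnnorm, Real.norm_eq_abs, abs_of_nonneg (hP.1 i _),
    sum_row_of_mem_rowStochastic hP i, le_refl]

theorem norm_smul_lt_one_of_mem_rowStochastic (hP : P ∈ rowStochastic ℝ n) {c : ℝ}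
    (hc : |c| < 1) : ‖c • P‖ < 1 := by
  rw [norm_smul, Real.norm_eq_abs]
  exact (mul_le_of_le_one_right (abs_nonneg c)
    (linfty_opNorm_le_one_of_mem_rowStochastic hP)).trans_lt hc

theorem isUnit_one_sub_smul_of_mem_rowStochastic (hP : P ∈ rowStochastic ℝ n) {c : ℝ}
    (hc : |c| < 1) : IsUnit (1 - c • P) :=
  isUnit_one_sub_of_norm_lt_one (norm_smul_lt_one_of_mem_rowStochastic hP hc)

theorem hasSum_pow_smul_pow_of_mem_rowStochastic (hP : P ∈ rowStochastic ℝ n) {c : ℝ}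
    (hc : |c| < 1) : HasSum (fun τ : ℕ => c ^ τ • P ^ τ) (1 - c • P)⁻¹ := by
  simp_rw [← smul_pow, nonsing_inv_eq_ringInverse]
  exact hasSum_geom_series_inverse _ (norm_smul_lt_one_of_mem_rowStochastic hP hc)

end LinftyOpNorm

theorem _root_.HasSum.matrix_mul_left {ι l m n R : Type*} [Fintype m]
    [NonUnitalNonAssocSemiring R] [TopologicalSpace R] [ContinuousAdd R] [ContinuousMul R]
    {f : ι → Matrix m n R} {a : Matrix m n R} (A : Matrix l m R) (hf : HasSum f a) :
    HasSum (fun i => A * f i) (A * a) :=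
  hf.map (⟨⟨(A * ·), Matrix.mul_zero A⟩, Matrix.mul_add A⟩ : Matrix m n R →+ Matrix l n R)
    (continuous_const.matrix_mul continuous_id)

theorem eq_sum_add_pow_smul_of_recurrence {R l n : Type*} [CommRing R] [Fintype n]
    [DecidableEq n]
    {P : Matrix n n R} {c : R} {u β : ℕ → Matrix l n R} {b : ℕ}
    (hβ : ∀ τ, 1 ≤ τ → τ ≤ b → β τ = u τ + c • (β (τ - 1) * P)) {m : ℕ} (hm : m ≤ b) :
    β m = ∑ τ ∈ Finset.range m, c ^ τ • (u (m - τ) * P ^ τ) + c ^ m • (β 0 * P ^ m) := by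
  induction m with
  | zero => simp
  | succ m ih =>
    rw [hβ (m + 1) m.succ_pos hm, Nat.add_sub_cancel, ih (by omega), Finset.sum_range_succ']
    simp only [Matrix.add_mul, Matrix.sum_mul, Matrix.smul_mul, smul_add, Finset.smul_sum,
      smul_smul, Matrix.mul_assoc, pow_succ, Nat.sub_zero, pow_zero, one_smul, Matrix.mul_one,
      Nat.succ_sub_succ, mul_comm c]
    abel

end Matrix

/-- Bias identity for PER-ETD(λ). With `P` row-stochastic,
`0 ≤ γλ < 1`, `M = λD + (1-λ)F`, `β₀ = Φᵀ D₀` and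
`β_τ = λ Φᵀ D_τ + (1-λ) Φᵀ F_τ + γλ β_{τ-1} P` for `τ = 1, …, b`:
`I - γλP` is invertible, `(I - γλP)⁻¹ = ∑_{τ=0}^∞ (γλ)^τ P^τ`
(the series converging entrywise), and
`Φᵀ M (I - γλP)⁻¹ - β_b
  = ∑_{τ=0}^{b-1} (γλ)^τ Φᵀ (λ(D - D_{b-τ}) + (1-λ)(F - F_{b-τ})) P^τ
    - (γλ)^b Φᵀ D₀ P^b + ∑_{τ=b}^∞ (γλ)^τ Φᵀ M P^τ`. -/
theorem per_etd_lambda_bias_identity (N k : ℕ)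
    (P : Matrix (Fin N) (Fin N) ℝ)
    (hP0 : ∀ i j, 0 ≤ P i j) (hProw : ∀ i, ∑ j, P i j = 1)
    (γ l : ℝ) (h0 : 0 ≤ γ * l) (h1 : γ * l < 1)
    (Φt : Matrix (Fin k) (Fin N) ℝ)
    (D F : Matrix (Fin N) (Fin N) ℝ)
    (Dseq Fseq : ℕ → Matrix (Fin N) (Fin N) ℝ)
    (b : ℕ)
    (β : ℕ → Matrix (Fin k) (Fin N) ℝ)
    (hβ0 : β 0 = Φt * Dseq 0)
    (hβ : ∀ τ, 1 ≤ τ → τ ≤ b →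
      β τ = l • (Φt * Dseq τ) + (1 - l) • (Φt * Fseq τ) + (γ * l) • (β (τ - 1) * P)) :
    IsUnit ((1 : Matrix (Fin N) (Fin N) ℝ) - (γ * l) • P) ∧
    HasSum (fun τ : ℕ => (γ * l) ^ τ • P ^ τ)
      ((1 : Matrix (Fin N) (Fin N) ℝ) - (γ * l) • P)⁻¹ ∧
    Φt * (l • D + (1 - l) • F) * ((1 : Matrix (Fin N) (Fin N) ℝ) - (γ * l) • P)⁻¹ - β b
      = (∑ τ ∈ Finset.range b, (γ * l) ^ τ •
            (Φt * (l • (D - Dseq (b - τ)) + (1 - l) • (F - Fseq (b - τ))) * P ^ τ))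
        - (γ * l) ^ b • (Φt * Dseq 0 * P ^ b)
        + ∑' τ : ℕ, (γ * l) ^ (τ + b) • (Φt * (l • D + (1 - l) • F) * P ^ (τ + b)) := by
  have hP : P ∈ rowStochastic ℝ (Fin N) := mem_rowStochastic_iff_sum.2 ⟨hP0, hProw⟩
  have hc : |γ * l| < 1 := abs_lt.2 ⟨by linarith, h1⟩
  have hS := hasSum_pow_smul_pow_of_mem_rowStochastic hP hc
  refine ⟨isUnit_one_sub_smul_of_mem_rowStochastic hP hc, hS, ?_⟩
  have hMS := hS.matrix_mul_left (Φt * (l • D + (1 - l) • F))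
  simp only [Matrix.mul_smul] at hMS
  rw [← hMS.tsum_eq, ← hMS.summable.sum_add_tsum_nat_add b,
    eq_sum_add_pow_smul_of_recurrence hβ le_rfl, hβ0]
  have hdiff : ∀ j, Φt * (l • (D - Dseq j) + (1 - l) • (F - Fseq j)) =
      Φt * (l • D + (1 - l) • F) - (l • (Φt * Dseq j) + (1 - l) • (Φt * Fseq j)) := fun j => by
    simp only [Matrix.mul_add, Matrix.mul_sub, Matrix.mul_smul, smul_sub]
    abel
  simp only [hdiff]
  simp only [Matrix.sub_mul, smul_sub, Finset.sum_sub_distrib]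
  abel
end

section
/- (One-step descent inequality) Let Θ be a nonempty closed convex subset of ℝ^d, let T : ℝ^d → ℝ^d satisfy ‖T(θ₁) − T(θ₂)‖₂ ≤ L‖θ₁ − θ₂‖₂ for all θ₁, θ₂ (L > 0), let Ĝ ∈ ℝ^d, η ≥ 0 and θ_t ∈ ℝ^d, and let θ_{t+1} ∈ Θ be a minimizer over Θ of θ ↦ η⟨Ĝ, θ⟩ + (1/2)‖θ − θ_t‖₂². Then for every θ ∈ Θ: (1/2)‖θ_t − θ‖₂² ≥ η⟨T(θ_{t+1}), θ_{t+1} − θ⟩ + (1/2 − η²L²)‖θ_{t+1} − θ‖₂² + η⟨Ĝ − T(θ_t), θ_t − θ⟩ − η²‖Ĝ − T(θ_t)‖₂². -/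
/-!
The step `θ_{t+1}` is the Euclidean projection of `θ_t - η Ĝ` onto `Θ`, so the projection's
variational inequality gives the three-point inequality
`η⟨Ĝ, θ_{t+1} - θ⟩ + ½‖θ_t - θ_{t+1}‖² + ½‖θ_{t+1} - θ‖² ≤ ½‖θ_t - θ‖²`.
Splitting `Ĝ = T θ_{t+1} + (Ĝ - T θ_t) + (T θ_t - T θ_{t+1})` leaves two cross terms, each
absorbed by Young's inequality into `¼‖θ_t - θ_{t+1}‖²` (using the Lipschitz bound for the
second), which together use up the term `½‖θ_t - θ_{t+1}‖²`.
-/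

open scoped RealInnerProductSpace

section

variable {F : Type*} [NormedAddCommGroup F] [InnerProductSpace ℝ F]

theorem inner_sub_nonpos_of_isMinOn_prox {K : Set F} (hK : Convex ℝ K) {η : ℝ} {g x v : F}
    (hv : v ∈ K) (hmin : IsMinOn (fun w => η * ⟪g, w⟫ + 1 / 2 * ‖w - x‖ ^ 2) K v) :
    ∀ w ∈ K, ⟪x - η • g - v, w - v⟫ ≤ 0 := by
  have norm_sq_eq (w : F) :
      ‖x - η • g - w‖ ^ 2 = 2 * (η * ⟪g, w⟫ + 1 / 2 * ‖w - x‖ ^ 2) + η ^ 2 * ‖g‖ ^ 2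
        - 2 * η * ⟪g, x⟫ := by
    rw [← norm_neg, neg_sub, sub_sub_eq_add_sub, add_sub_right_comm, norm_add_sq_real,
      inner_smul_right, norm_smul, mul_pow, Real.norm_eq_abs, sq_abs, inner_sub_left,
      real_inner_comm g w, real_inner_comm g x]
    ring
  have closest : ∀ w ∈ K, ‖x - η • g - v‖ ≤ ‖x - η • g - w‖ := fun w hw =>
    (sq_le_sq₀ (norm_nonneg _) (norm_nonneg _)).1 <| by
      rw [norm_sq_eq, norm_sq_eq]
      linarith [isMinOn_iff.1 hmin w hw]
  have : Nonempty K := ⟨⟨v, hv⟩⟩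
  rw [← norm_eq_iInf_iff_real_inner_le_zero hK hv]
  exact le_antisymm (le_ciInf fun w => closest w w.2)
    (ciInf_le ⟨0, Set.forall_mem_range.2 fun _ => norm_nonneg _⟩ (⟨v, hv⟩ : K))

theorem prox_three_point {K : Set F} (hK : Convex ℝ K) {η : ℝ} {g x v : F} (hv : v ∈ K)
    (hmin : IsMinOn (fun w => η * ⟪g, w⟫ + 1 / 2 * ‖w - x‖ ^ 2) K v) {w : F} (hw : w ∈ K) :
    η * ⟪g, v - w⟫ + 1 / 2 * ‖x - v‖ ^ 2 + 1 / 2 * ‖v - w‖ ^ 2 ≤ 1 / 2 * ‖x - w‖ ^ 2 := by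
  have hvi := inner_sub_nonpos_of_isMinOn_prox hK hv hmin w hw
  have hsplit : ‖x - w‖ ^ 2 = ‖x - v‖ ^ 2 + 2 * ⟪x - v, v - w⟫ + ‖v - w‖ ^ 2 := by
    rw [← norm_add_sq_real, sub_add_sub_cancel]
  rw [← neg_sub v w, inner_neg_right, sub_right_comm, inner_sub_left, real_inner_smul_left] at hvi
  linarith

theorem mul_inner_le_abs_mul_norm_mul_norm (η : ℝ) (u z : F) :
    η * ⟪u, z⟫ ≤ |η| * (‖u‖ * ‖z‖) :=
  (le_abs_self _).trans <| by
    rw [abs_mul]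
    exact mul_le_mul_of_nonneg_left (abs_real_inner_le_norm u z) (abs_nonneg η)

theorem mul_inner_le_sq_mul_norm_sq_add_norm_sq_div_four (η : ℝ) (u z : F) :
    η * ⟪u, z⟫ ≤ η ^ 2 * ‖u‖ ^ 2 + ‖z‖ ^ 2 / 4 := by
  nlinarith [mul_inner_le_abs_mul_norm_mul_norm η u z, sq_nonneg (|η| * ‖u‖ - ‖z‖ / 2), sq_abs η]

theorem mul_inner_sub_le_of_lipschitz {T : F → F} {L : ℝ}
    (hT : ∀ a b, ‖T a - T b‖ ≤ L * ‖a - b‖) (η : ℝ) (x v y : F) :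
    η * ⟪T x - T v, y⟫ ≤ η ^ 2 * L ^ 2 * ‖y‖ ^ 2 + ‖x - v‖ ^ 2 / 4 := by
  have hTy : |η| * (‖T x - T v‖ * ‖y‖) ≤ |η| * (L * ‖x - v‖ * ‖y‖) :=
    mul_le_mul_of_nonneg_left (mul_le_mul_of_nonneg_right (hT x v) (norm_nonneg y))
      (abs_nonneg η)
  have hsq : (|η| * L * ‖y‖) ^ 2 = η ^ 2 * L ^ 2 * ‖y‖ ^ 2 := by rw [mul_pow, mul_pow, sq_abs]
  nlinarith [mul_inner_le_abs_mul_norm_mul_norm η (T x - T v) y,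
    sq_nonneg (|η| * L * ‖y‖ - ‖x - v‖ / 2)]

end

theorem one_step_descent_general (d : ℕ) (Θ : Set (EuclideanSpace ℝ (Fin d)))
    (hcv : Convex ℝ Θ)
    (T : EuclideanSpace ℝ (Fin d) → EuclideanSpace ℝ (Fin d))
    (L : ℝ)
    (hT : ∀ θ₁ θ₂, ‖T θ₁ - T θ₂‖ ≤ L * ‖θ₁ - θ₂‖)
    (G θt : EuclideanSpace ℝ (Fin d)) (η : ℝ)
    (θt1 : EuclideanSpace ℝ (Fin d)) (hmem : θt1 ∈ Θ)
    (hmin : ∀ θ ∈ Θ,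
      η * ⟪G, θt1⟫ + (1 / 2) * ‖θt1 - θt‖ ^ 2 ≤ η * ⟪G, θ⟫ + (1 / 2) * ‖θ - θt‖ ^ 2) :
    ∀ θ ∈ Θ,
      η * ⟪T θt1, θt1 - θ⟫ + (1 / 2 - η ^ 2 * L ^ 2) * ‖θt1 - θ‖ ^ 2
        + η * ⟪G - T θt, θt - θ⟫ - η ^ 2 * ‖G - T θt‖ ^ 2
      ≤ (1 / 2) * ‖θt - θ‖ ^ 2 := by
  intro θ hθ
  have three_point := prox_three_point hcv hmem (isMinOn_iff.2 hmin) hθ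
  have noise := mul_inner_le_sq_mul_norm_sq_add_norm_sq_div_four η (G - T θt) (θt - θt1)
  have drift := mul_inner_sub_le_of_lipschitz hT η θt1 θt (θt1 - θ)
  rw [norm_sub_rev θt1 θt] at drift
  have hG : ⟪G, θt1 - θ⟫ = ⟪T θt1, θt1 - θ⟫ + ⟪G - T θt, θt - θ⟫ - ⟪G - T θt, θt - θt1⟫
      - ⟪T θt1 - T θt, θt1 - θ⟫ := by
    simp only [inner_sub_left, inner_sub_right]
    ring
  rw [hG] at three_point
  linarith

/-- One-step descent inequality: Let `Θ ⊆ ℝ^d` be nonempty, closed,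
convex, let `T` be `L`-Lipschitz (`L > 0`), `Ĝ ∈ ℝ^d`, `η ≥ 0`, and let
`θ_{t+1} ∈ Θ` minimize `θ ↦ η⟨Ĝ, θ⟩ + (1/2)‖θ - θ_t‖²` over `Θ`. Then for every
`θ ∈ Θ`:
`(1/2)‖θ_t - θ‖² ≥ η⟨T θ_{t+1}, θ_{t+1} - θ⟩ + (1/2 - η²L²)‖θ_{t+1} - θ‖²
  + η⟨Ĝ - T θ_t, θ_t - θ⟩ - η²‖Ĝ - T θ_t‖²`. -/
theorem one_step_descent (d : ℕ) (Θ : Set (EuclideanSpace ℝ (Fin d)))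
    (hne : Θ.Nonempty) (hcl : IsClosed Θ) (hcv : Convex ℝ Θ)
    (T : EuclideanSpace ℝ (Fin d) → EuclideanSpace ℝ (Fin d))
    (L : ℝ) (hL : 0 < L)
    (hT : ∀ θ₁ θ₂, ‖T θ₁ - T θ₂‖ ≤ L * ‖θ₁ - θ₂‖)
    (G θt : EuclideanSpace ℝ (Fin d)) (η : ℝ) (hη : 0 ≤ η)
    (θt1 : EuclideanSpace ℝ (Fin d)) (hmem : θt1 ∈ Θ)
    (hmin : ∀ θ ∈ Θ,
      η * ⟪G, θt1⟫ + (1 / 2) * ‖θt1 - θt‖ ^ 2 ≤ η * ⟪G, θ⟫ + (1 / 2) * ‖θ - θt‖ ^ 2) :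
    ∀ θ ∈ Θ,
      η * ⟪T θt1, θt1 - θ⟫ + (1 / 2 - η ^ 2 * L ^ 2) * ‖θt1 - θ‖ ^ 2
        + η * ⟪G - T θt, θt - θ⟫ - η ^ 2 * ‖G - T θt‖ ^ 2
      ≤ (1 / 2) * ‖θt - θ‖ ^ 2 :=
  one_step_descent_general d Θ hcv T L hT G θt η θt1 hmem hmin
end

section
/- (Deterministic core of the PER-ETD(0) variance bound, Proposition 2) Let P be an N×N row-stochastic matrix, let Q be an N×N matrix with nonnegative entries whose rows each sum to at most ρ (ρ > 0), let 0 < γ < 1 and L ≥ 0, and let b ≥ 1 be an integer. Let d₁, …, d_b ∈ ℝ^N be probability vectors, let f₀, …, f_{b−1} ∈ ℝ^N be nonnegative vectors with 𝟙ᵀ f_τ ≤ 1 + L for all τ, let r₀ ∈ ℝ^N be nonnegative with 𝟙ᵀ r₀ = 1, and define r_τ = d_τ + 2γ Pᵀ f_{τ−1} + γ² Qᵀ r_{τ−1} for τ = 1, …, b. Then: (a) if γ²ρ > 1, 𝟙ᵀ r_b ≤ ((3 + 2γL)/(γ²ρ − 1) + 1) · (γ²ρ)^b; (b) if γ²ρ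 = 1, 𝟙ᵀ r_b ≤ (3 + 2γL) · b + 1; (c) if γ²ρ < 1, 𝟙ᵀ r_b ≤ (3 + 2γL)/(1 − γ²ρ) + 1. -/
/-!
Summing the recursion over states, a row-stochastic `Pᵀ` preserves total mass and `Qᵀ` scales
the mass of a nonnegative vector by at most `ρ`, so `s_τ = 𝟙ᵀ r_τ` obeys the affine inequality
`s_τ ≤ (3 + 2γL) + γ²ρ · s_{τ-1}` with `s₀ = 1`. Hence `s_b ≤ (3 + 2γL) ∑_{k<b} (γ²ρ)^k + (γ²ρ)^b`,
and the three regimes are the three behaviours of this geometric sum.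
-/

open Matrix Finset

namespace Matrix

variable {R n : Type*} [Fintype n] [Semiring R] [PartialOrder R] [IsOrderedRing R]

lemma vecMul_nonneg {M : Matrix n n R} (hM : ∀ i j, 0 ≤ M i j) {x : n → R} (hx : 0 ≤ x) :
    0 ≤ x ᵥ* M :=
  fun j => sum_nonneg fun i _ => mul_nonneg (hx i) (hM i j)

lemma sum_vecMul_of_mem_rowStochastic [DecidableEq n] {M : Matrix n n R}
    (hM : M ∈ rowStochastic R n) (x : n → R) : ∑ i, (x ᵥ* M) i = ∑ i, x i := by
  rw [← dotProduct_one, ← dotProduct_one, ← dotProduct_mulVec, hM.2]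

lemma sum_vecMul_le_of_sum_row_le {M : Matrix n n R} {ρ : R} (hM : ∀ i, ∑ j, M i j ≤ ρ)
    {x : n → R} (hx : 0 ≤ x) : ∑ i, (x ᵥ* M) i ≤ (∑ i, x i) * ρ := by
  calc ∑ i, (x ᵥ* M) i = ∑ j, x j * ∑ i, M j i := by
        simp only [vecMul, dotProduct, mul_sum]
        exact sum_comm
    _ ≤ ∑ j, x j * ρ := sum_le_sum fun j _ => mul_le_mul_of_nonneg_left (hM j) (hx j)
    _ = (∑ i, x i) * ρ := (sum_mul ..).symm

end Matrix

section SecondMomentRecursion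

variable {ι : Type*} [Fintype ι] {P Q : Matrix ι ι ℝ} {d f r : ι → ℝ} {γ : ℝ}

lemma secondMoment_step_nonneg (hP : ∀ i j, 0 ≤ P i j) (hQ : ∀ i j, 0 ≤ Q i j)
    (hγ : 0 ≤ γ) (hd : 0 ≤ d) (hf : 0 ≤ f) (hr : 0 ≤ r) :
    0 ≤ d + (2 * γ) • (Pᵀ *ᵥ f) + γ ^ 2 • (Qᵀ *ᵥ r) := by
  rw [mulVec_transpose, mulVec_transpose]
  have := vecMul_nonneg hP hf
  have := vecMul_nonneg hQ hr
  positivity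

lemma sum_secondMoment_step_le [DecidableEq ι] (hP : P ∈ rowStochastic ℝ ι) {ρ L : ℝ}
    (hQ : ∀ i, ∑ j, Q i j ≤ ρ) (hγ0 : 0 ≤ γ) (hγ1 : γ ≤ 1) (hd : ∑ i, d i = 1)
    (hf : ∑ i, f i ≤ 1 + L) (hr : 0 ≤ r) :
    ∑ i, (d + (2 * γ) • (Pᵀ *ᵥ f) + γ ^ 2 • (Qᵀ *ᵥ r)) i
      ≤ 3 + 2 * γ * L + γ ^ 2 * ρ * ∑ i, r i := by
  have hPf := sum_vecMul_of_mem_rowStochastic hP f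
  have hQr := sum_vecMul_le_of_sum_row_le hQ hr
  simp only [mulVec_transpose, Pi.add_apply, Pi.smul_apply, smul_eq_mul, sum_add_distrib,
    ← mul_sum, hd, hPf]
  nlinarith [mul_le_mul_of_nonneg_left hQr (sq_nonneg γ)]

end SecondMomentRecursion

lemma le_mul_geom_sum_add_pow {s : ℕ → ℝ} {a c : ℝ} (ha : 0 ≤ a) (h0 : s 0 ≤ 1) {b : ℕ}
    (hs : ∀ n < b, s (n + 1) ≤ c + a * s n) : s b ≤ c * ∑ k ∈ range b, a ^ k + a ^ b := by
  induction b with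
  | zero => simpa using h0
  | succ b ih =>
    have ih := ih fun n hn => hs n (by omega)
    calc s (b + 1) ≤ c + a * s b := hs b b.lt_succ_self
      _ ≤ c + a * (c * ∑ k ∈ range b, a ^ k + a ^ b) := by gcongr
      _ = c * ∑ k ∈ range (b + 1), a ^ k + a ^ (b + 1) := by
        rw [geom_sum_succ]
        ring

lemma mul_geom_sum_add_pow_le_of_one_lt {a c : ℝ} (ha : 1 < a) (hc : 0 ≤ c) (b : ℕ) :
    c * ∑ k ∈ range b, a ^ k + a ^ b ≤ (c / (a - 1) + 1) * a ^ b := by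
  have ha1 : 0 < a - 1 := by linarith
  rw [geom_sum_eq ha.ne', add_mul, one_mul, div_mul_eq_mul_div, mul_div_assoc]
  gcongr
  linarith

lemma mul_geom_sum_add_pow_le_of_lt_one {a c : ℝ} (ha0 : 0 ≤ a) (ha1 : a < 1) (hc : 0 ≤ c)
    (b : ℕ) : c * ∑ k ∈ range b, a ^ k + a ^ b ≤ c / (1 - a) + 1 := by
  have hsum : ∑ k ∈ range b, a ^ k ≤ 1 / (1 - a) := by
    have := geom_sum_Ico_le_of_lt_one (m := 0) (n := b) ha0 ha1
    rwa [← range_eq_Ico, pow_zero] at this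
  calc c * ∑ k ∈ range b, a ^ k + a ^ b ≤ c * (1 / (1 - a)) + 1 := by
        gcongr
        exact pow_le_one₀ ha0 ha1.le
    _ = c / (1 - a) + 1 := by rw [mul_one_div]

theorem per_etd0_variance_bound_general (N : ℕ)
    (P Q : Matrix (Fin N) (Fin N) ℝ)
    (hP0 : ∀ i j, 0 ≤ P i j) (hProw : ∀ i, ∑ j, P i j = 1)
    (ρ : ℝ) (hρ : 0 < ρ)
    (hQ0 : ∀ i j, 0 ≤ Q i j) (hQrow : ∀ i, ∑ j, Q i j ≤ ρ)
    (γ L : ℝ) (hγ0 : 0 < γ) (hγ1 : γ < 1) (hL : 0 ≤ L)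
    (b : ℕ)
    (dseq : ℕ → Fin N → ℝ)
    (hd0 : ∀ τ, 1 ≤ τ → τ ≤ b → ∀ i, 0 ≤ dseq τ i)
    (hd1 : ∀ τ, 1 ≤ τ → τ ≤ b → ∑ i, dseq τ i = 1)
    (fseq : ℕ → Fin N → ℝ)
    (hf0 : ∀ τ, τ ≤ b - 1 → ∀ i, 0 ≤ fseq τ i)
    (hf1 : ∀ τ, τ ≤ b - 1 → ∑ i, fseq τ i ≤ 1 + L)
    (r : ℕ → Fin N → ℝ)
    (hr00 : ∀ i, 0 ≤ r 0 i) (hr01 : ∑ i, r 0 i = 1)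
    (hrec : ∀ τ, 1 ≤ τ → τ ≤ b →
      r τ = dseq τ + (2 * γ) • (Pᵀ *ᵥ fseq (τ - 1)) + γ ^ 2 • (Qᵀ *ᵥ r (τ - 1))) :
    (1 < γ ^ 2 * ρ →
        ∑ i, r b i ≤ ((3 + 2 * γ * L) / (γ ^ 2 * ρ - 1) + 1) * (γ ^ 2 * ρ) ^ b) ∧
    (γ ^ 2 * ρ = 1 → ∑ i, r b i ≤ (3 + 2 * γ * L) * b + 1) ∧
    (γ ^ 2 * ρ < 1 → ∑ i, r b i ≤ (3 + 2 * γ * L) / (1 - γ ^ 2 * ρ) + 1) := by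
  have hP : P ∈ rowStochastic ℝ (Fin N) := mem_rowStochastic_iff_sum.2 ⟨hP0, hProw⟩
  have hrec' : ∀ n < b, r (n + 1) =
      dseq (n + 1) + (2 * γ) • (Pᵀ *ᵥ fseq n) + γ ^ 2 • (Qᵀ *ᵥ r n) := fun n hn =>
    hrec (n + 1) (by omega) hn
  have hr_nonneg : ∀ n ≤ b, 0 ≤ r n := by
    intro n
    induction n with
    | zero => exact fun _ => hr00
    | succ n ih =>
      intro hn
      rw [hrec' n hn]
      exact secondMoment_step_nonneg hP0 hQ0 hγ0.le (hd0 _ (by omega) hn) (hf0 n (by omega))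
        (ih (by omega))
  have hsum : ∑ i, r b i ≤ (3 + 2 * γ * L) * ∑ k ∈ range b, (γ ^ 2 * ρ) ^ k + (γ ^ 2 * ρ) ^ b :=
    le_mul_geom_sum_add_pow (s := fun n => ∑ i, r n i) (by positivity) hr01.le fun n hn => by
      rw [hrec' n hn]
      exact sum_secondMoment_step_le hP hQrow hγ0.le hγ1.le (hd1 _ (by omega) hn)
        (hf1 n (by omega)) (hr_nonneg n hn.le)
  have hc : 0 ≤ 3 + 2 * γ * L := by positivity
  refine ⟨fun ha => hsum.trans (mul_geom_sum_add_pow_le_of_one_lt ha hc b), fun ha => ?_,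
    fun ha => hsum.trans (mul_geom_sum_add_pow_le_of_lt_one (by positivity) ha hc b)⟩
  simpa [ha] using hsum

/-- Deterministic core of the PER-ETD(0) variance bound, Proposition 2:
With `P` row-stochastic, `Q` nonnegative with row sums at most `ρ > 0`, `0 < γ < 1`,
`L ≥ 0`, `b ≥ 1`, probability vectors `d₁, …, d_b`, nonnegative vectors
`f₀, …, f_{b-1}` with `𝟙ᵀ f_τ ≤ 1 + L`, `r₀ ≥ 0` with `𝟙ᵀ r₀ = 1`, and the
recursion `r_τ = d_τ + 2γ Pᵀ f_{τ-1} + γ² Qᵀ r_{τ-1}` for `τ = 1, …, b`: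
(a) if `γ²ρ > 1`, `𝟙ᵀ r_b ≤ ((3 + 2γL)/(γ²ρ - 1) + 1) (γ²ρ)^b`;
(b) if `γ²ρ = 1`, `𝟙ᵀ r_b ≤ (3 + 2γL) b + 1`;
(c) if `γ²ρ < 1`, `𝟙ᵀ r_b ≤ (3 + 2γL)/(1 - γ²ρ) + 1`. -/
theorem per_etd0_variance_bound (N : ℕ)
    (P Q : Matrix (Fin N) (Fin N) ℝ)
    (hP0 : ∀ i j, 0 ≤ P i j) (hProw : ∀ i, ∑ j, P i j = 1)
    (ρ : ℝ) (hρ : 0 < ρ)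
    (hQ0 : ∀ i j, 0 ≤ Q i j) (hQrow : ∀ i, ∑ j, Q i j ≤ ρ)
    (γ L : ℝ) (hγ0 : 0 < γ) (hγ1 : γ < 1) (hL : 0 ≤ L)
    (b : ℕ) (hb : 1 ≤ b)
    (dseq : ℕ → Fin N → ℝ)
    (hd0 : ∀ τ, 1 ≤ τ → τ ≤ b → ∀ i, 0 ≤ dseq τ i)
    (hd1 : ∀ τ, 1 ≤ τ → τ ≤ b → ∑ i, dseq τ i = 1)
    (fseq : ℕ → Fin N → ℝ)
    (hf0 : ∀ τ, τ ≤ b - 1 → ∀ i, 0 ≤ fseq τ i)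
    (hf1 : ∀ τ, τ ≤ b - 1 → ∑ i, fseq τ i ≤ 1 + L)
    (r : ℕ → Fin N → ℝ)
    (hr00 : ∀ i, 0 ≤ r 0 i) (hr01 : ∑ i, r 0 i = 1)
    (hrec : ∀ τ, 1 ≤ τ → τ ≤ b →
      r τ = dseq τ + (2 * γ) • (Pᵀ *ᵥ fseq (τ - 1)) + γ ^ 2 • (Qᵀ *ᵥ r (τ - 1))) :
    (1 < γ ^ 2 * ρ →
        ∑ i, r b i ≤ ((3 + 2 * γ * L) / (γ ^ 2 * ρ - 1) + 1) * (γ ^ 2 * ρ) ^ b) ∧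
    (γ ^ 2 * ρ = 1 → ∑ i, r b i ≤ (3 + 2 * γ * L) * b + 1) ∧
    (γ ^ 2 * ρ < 1 → ∑ i, r b i ≤ (3 + 2 * γ * L) / (1 - γ ^ 2 * ρ) + 1) :=
  per_etd0_variance_bound_general N P Q hP0 hProw ρ hρ hQ0 hQrow γ L hγ0 hγ1 hL b dseq hd0 hd1 fseq
    hf0 hf1 r hr00 hr01 hrec
end

section
/- Let μ and L be real numbers with 0 < μ ≤ L, set t₀ = 8L²/μ², and for each natural number t set η_t = 2/(μ(t + t₀)) and α_t = (t + t₀ + 1)(t + t₀ + 2). Then for every t ≥ 0: (i) α_t (1 + 2μη_t − 2L²η_t²) ≥ (t + t₀ + 1)(t + t₀ + 2)(t + t₀ + 3)/(t + t₀); (ii) for every real c with 0 ≤ c ≤ μ/5, α_{t+1}(1 + 2cη_{t+1} + 8c²η_{t+1}²) ≤ (t + t₀ + 2)²(t + t₀ + 3)/(t + t₀ + 1); and consequently (iii) α_t (1 + 2μη_t − 2L²η_t²) − α_{t+1}(1 + 2cη_{t+1} + 8c²η_{t+1}²) ≥ (t + t₀ + 2)(t + t₀ + 3)/((t + t₀)(t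 + t₀ + 1)) > 0. -/
/-!
With `T = t + t₀`, the stepsize gives `2μη_t = 4/T` and `2L²η_t² = t₀/T²`, so the contraction
factor is `1 + 4/T - t₀/T² ≥ 1 + 3/T` exactly because `T ≥ t₀`. For `c ≤ μ/5` the expansion
factor at `t + 1` is at most `1 + 4/(5S) + 32/(25S²)` with `S = T + 1`, which is `≤ 1 + 1/S` once
`S ≥ 32/5`; this holds since `μ ≤ L` forces `t₀ ≥ 8`. The gap between the two weighted factors is
then an explicit rational function of `T`.
-/

namespace StepsizeWeight

lemma eight_le_eight_mul_sq_div_sq {μ L : ℝ} (hμ : 0 < μ) (hμL : μ ≤ L) :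
    8 ≤ 8 * L ^ 2 / μ ^ 2 := by
  rw [le_div_iff₀ (by positivity)]
  nlinarith

lemma one_add_three_div_le_contraction {μ L T : ℝ} (hμ : 0 < μ) (hT : 0 < T)
    (hT₀ : 8 * L ^ 2 / μ ^ 2 ≤ T) :
    1 + 3 / T ≤ 1 + 2 * μ * (2 / (μ * T)) - 2 * L ^ 2 * (2 / (μ * T)) ^ 2 := by
  have hfactor : 1 + 2 * μ * (2 / (μ * T)) - 2 * L ^ 2 * (2 / (μ * T)) ^ 2
      = 1 + 3 / T + (T - 8 * L ^ 2 / μ ^ 2) / T ^ 2 := by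
    field_simp
    ring
  rw [hfactor, le_add_iff_nonneg_right]
  exact div_nonneg (sub_nonneg.mpr hT₀) (sq_nonneg T)

lemma weighted_contraction_ge {μ L T : ℝ} (hμ : 0 < μ) (hT : 0 < T)
    (hT₀ : 8 * L ^ 2 / μ ^ 2 ≤ T) :
    (T + 1) * (T + 2) * (T + 3) / T ≤
      (T + 1) * (T + 2) * (1 + 2 * μ * (2 / (μ * T)) - 2 * L ^ 2 * (2 / (μ * T)) ^ 2) :=
  calc (T + 1) * (T + 2) * (T + 3) / T = (T + 1) * (T + 2) * (1 + 3 / T) := by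
        field_simp
    _ ≤ _ := mul_le_mul_of_nonneg_left (one_add_three_div_le_contraction hμ hT hT₀)
        (by positivity)

lemma expansion_le_one_add_inv {μ c S : ℝ} (hμ : 0 < μ) (hc₀ : 0 ≤ c) (hc : c ≤ μ / 5)
    (hS : 32 / 5 ≤ S) :
    1 + 2 * c * (2 / (μ * S)) + 8 * c ^ 2 * (2 / (μ * S)) ^ 2 ≤ 1 + 1 / S := by
  have hS₀ : 0 < S := by linarith
  set x := c * (2 / (μ * S)) with hx
  have hx₀ : 0 ≤ x := by positivity
  have hxS : x * S ≤ 2 / 5 := by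
    have hxS_eq : x * S = 2 * c / μ := by
      rw [hx]
      field_simp
    rw [hxS_eq, div_le_iff₀ hμ]
    linarith
  have hx_small : x ≤ 1 / 16 := by nlinarith
  have hexpand :
      1 + 2 * c * (2 / (μ * S)) + 8 * c ^ 2 * (2 / (μ * S)) ^ 2 = 1 + 2 * x + 8 * x ^ 2 := by
    rw [hx]
    ring
  rw [hexpand, add_assoc, add_le_add_iff_left, le_div_iff₀ hS₀]
  nlinarith

lemma weighted_expansion_le {μ c S : ℝ} (hμ : 0 < μ) (hc₀ : 0 ≤ c) (hc : c ≤ μ / 5)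
    (hS : 32 / 5 ≤ S) :
    (S + 1) * (S + 2) * (1 + 2 * c * (2 / (μ * S)) + 8 * c ^ 2 * (2 / (μ * S)) ^ 2) ≤
      (S + 1) ^ 2 * (S + 2) / S :=
  calc _ ≤ (S + 1) * (S + 2) * (1 + 1 / S) :=
        mul_le_mul_of_nonneg_left (expansion_le_one_add_inv hμ hc₀ hc hS) (by positivity)
    _ = (S + 1) ^ 2 * (S + 2) / S := by
        have : S ≠ 0 := by linarith
        field_simp

lemma weight_gap_eq {T : ℝ} (hT : 0 < T) :
    (T + 1) * (T + 2) * (T + 3) / T - (T + 2) ^ 2 * (T + 3) / (T + 1) =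
      (T + 2) * (T + 3) / (T * (T + 1)) := by
  field_simp
  ring

end StepsizeWeight

open StepsizeWeight in
/-- Stepsize/weight arithmetic for the convergence proof of Theorem 1.
With `0 < μ ≤ L`, `t₀ = 8L²/μ²`, `η_t = 2/(μ(t + t₀))`,
`α_t = (t + t₀ + 1)(t + t₀ + 2)`, for every `t : ℕ`:
(i)  `α_t (1 + 2μη_t - 2L²η_t²) ≥ (t+t₀+1)(t+t₀+2)(t+t₀+3)/(t+t₀)`;
(ii) for `0 ≤ c ≤ μ/5`,
     `α_{t+1}(1 + 2cη_{t+1} + 8c²η_{t+1}²) ≤ (t+t₀+2)²(t+t₀+3)/(t+t₀+1)`;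
(iii) consequently the difference is at least
     `(t+t₀+2)(t+t₀+3)/((t+t₀)(t+t₀+1)) > 0`. -/
theorem stepsize_weight_arith (μ L : ℝ) (hμ : 0 < μ) (hμL : μ ≤ L) (t : ℕ) :
    let t₀ : ℝ := 8 * L ^ 2 / μ ^ 2
    let η : ℕ → ℝ := fun s => 2 / (μ * ((s : ℝ) + t₀))
    let α : ℕ → ℝ := fun s => ((s : ℝ) + t₀ + 1) * ((s : ℝ) + t₀ + 2)
    (α t * (1 + 2 * μ * η t - 2 * L ^ 2 * (η t) ^ 2) ≥
      ((t : ℝ) + t₀ + 1) * ((t : ℝ) + t₀ + 2) * ((t : ℝ) + t₀ + 3) / ((t : ℝ) + t₀)) ∧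
    (∀ c : ℝ, 0 ≤ c → c ≤ μ / 5 →
      α (t + 1) * (1 + 2 * c * η (t + 1) + 8 * c ^ 2 * (η (t + 1)) ^ 2) ≤
        ((t : ℝ) + t₀ + 2) ^ 2 * ((t : ℝ) + t₀ + 3) / ((t : ℝ) + t₀ + 1)) ∧
    (∀ c : ℝ, 0 ≤ c → c ≤ μ / 5 →
      α t * (1 + 2 * μ * η t - 2 * L ^ 2 * (η t) ^ 2)
          - α (t + 1) * (1 + 2 * c * η (t + 1) + 8 * c ^ 2 * (η (t + 1)) ^ 2) ≥
        ((t : ℝ) + t₀ + 2) * ((t : ℝ) + t₀ + 3) / (((t : ℝ) + t₀) * ((t : ℝ) + t₀ + 1)) ∧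
      0 < ((t : ℝ) + t₀ + 2) * ((t : ℝ) + t₀ + 3) /
            (((t : ℝ) + t₀) * ((t : ℝ) + t₀ + 1))) := by
  intro t₀ η α
  have ht₀ : 8 ≤ t₀ := eight_le_eight_mul_sq_div_sq hμ hμL
  have hsucc : ((t + 1 : ℕ) : ℝ) + t₀ = (t + t₀) + 1 := by push_cast; ring
  simp only [η, α, hsucc]
  set T : ℝ := t + t₀
  have hT₀ : t₀ ≤ T := le_add_of_nonneg_left t.cast_nonneg
  have hT : 0 < T := by linarith
  have hcontraction := weighted_contraction_ge hμ hT hT₀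
  have hexpansion : ∀ c : ℝ, 0 ≤ c → c ≤ μ / 5 →
      (T + 1 + 1) * (T + 1 + 2) *
          (1 + 2 * c * (2 / (μ * (T + 1))) + 8 * c ^ 2 * (2 / (μ * (T + 1))) ^ 2) ≤
        (T + 2) ^ 2 * (T + 3) / (T + 1) := fun c hc₀ hc => by
    convert weighted_expansion_le hμ hc₀ hc (show 32 / 5 ≤ T + 1 by linarith) using 2
    ring
  refine ⟨hcontraction, hexpansion, fun c hc₀ hc => ⟨?_, by positivity⟩⟩
  rw [ge_iff_le, ← weight_gap_eq hT]
  linarith [hexpansion c hc₀ hc]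
end
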